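/- Let X ⊆ 𝒜^{ℤ^d} be a subshift and let Φ = (Φ_Λ) be a translation-invariant, absolutely summable interaction potential such that the function f = A_Φ := −Σ_{Λ∈𝓢, 0∈Λ} (1/|Λ|) Φ_Λ belongs to SV_d(X). Then for every nonempty finite Λ ⊆ ℤ^d, every Borel set A ⊆ X and every x ∈ X, the kernel γ_Λ associated to f satisfies γ_Λ(A|x) = [Σ_{ω∈𝒜^Λ} e^{−H^Φ_Λ(ω x_{Λ^c})} 1{ω x_{Λ^c} ∈ A}] / [Σ_{η∈𝒜^Λ} e^{−H^Φ_Λ(η x_{Λ^c})} 1{η x_{Λ^c} ∈ X}], where H^Φ_Λ = Σ_{Δ∈𝓢, Δ∩Λ≠∅} Φ_Δ is the Hamiltonian in Λ. -/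

import Mathlib

open MeasureTheory Filter Topology

/-- The full shift configuration space `𝒜^{ℤ^d}`. -/
abbrev Config (d : ℕ) (A : Type*) := (Fin d → ℤ) → A

/-- The shift action of `ℤ^d`: `(T^k x)_i = x_{i+k}`. -/
def shift {d : ℕ} {A : Type*} (k : Fin d → ℤ) (x : Config d A) : Config d A :=
  fun i => x (i + k)

/-- The ℓ∞ norm of a lattice point, `‖k‖_∞ = max_i |k_i|`. -/
def normInf {d : ℕ} (k : Fin d → ℤ) : ℕ :=
  Finset.univ.sup fun i => (k i).natAbs

/-- The box `Λ_N = {k : ‖k‖_∞ ≤ N}` as a finset. -/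
noncomputable def boxF (d N : ℕ) : Finset (Fin d → ℤ) :=
  Finset.Icc (fun _ => -(N : ℤ)) (fun _ => (N : ℤ))

/-- The `n`-th variation of `f` on a subshift `X`:
`δ_n(f) = sup {|f x - f y| : x, y ∈ X, x_{Λ_n} = y_{Λ_n}}`. -/
noncomputable def deltaVar {d : ℕ} {A : Type*} (X : Set (Config d A))
    (f : Config d A → ℝ) (n : ℕ) : ℝ :=
  sSup {r : ℝ | ∃ x ∈ X, ∃ y ∈ X,
    (∀ k : Fin d → ℤ, normInf k ≤ n → x k = y k) ∧ r = |f x - f y|}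

/-- `f` is bounded on `X`. -/
def BoundedOn {d : ℕ} {A : Type*} (X : Set (Config d A)) (f : Config d A → ℝ) : Prop :=
  ∃ C : ℝ, ∀ x ∈ X, |f x| ≤ C

/-- Membership in `SV_d(X)`: bounded with `Σ_{n ≥ 1} n^{d-1} δ_n(f) < ∞`. -/
def MemSV (d : ℕ) {A : Type*} (X : Set (Config d A)) (f : Config d A → ℝ) : Prop :=
  BoundedOn X f ∧ Summable fun n : ℕ => ((n : ℝ) + 1) ^ (d - 1) * deltaVar X f (n + 1)

/-- The sup norm of `f` over `X`. -/
noncomputable def supNormOn {d : ℕ} {A : Type*} (X : Set (Config d A))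
    (f : Config d A → ℝ) : ℝ :=
  sSup {r : ℝ | ∃ x ∈ X, r = |f x|}

/-- The `SV_d` norm: `‖f‖_{SV_d} = ‖f‖_∞ + Σ_{n ≥ 1} n^{d-1} δ_n(f)`. -/
noncomputable def svNorm (d : ℕ) {A : Type*} (X : Set (Config d A))
    (f : Config d A → ℝ) : ℝ :=
  supNormOn X f + ∑' n : ℕ, ((n : ℝ) + 1) ^ (d - 1) * deltaVar X f (n + 1)

/-- The Gibbs relation `𝔗`: pairs of points of `X` that agree outside a finite set. -/
def gibbsRel {d : ℕ} {A : Type*} (X : Set (Config d A)) :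
    Set (Config d A × Config d A) :=
  {p | p.1 ∈ X ∧ p.2 ∈ X ∧ ∃ Λ : Finset (Fin d → ℤ), ∀ k ∉ Λ, p.1 k = p.2 k}

/-- The cocycle `φ_f(x,y) = Σ_{k ∈ ℤ^d} (f(T^k y) - f(T^k x))` (unordered sum). -/
noncomputable def phiF {d : ℕ} {A : Type*} (f : Config d A → ℝ)
    (x y : Config d A) : ℝ :=
  ∑' k : Fin d → ℤ, (f (shift k y) - f (shift k x))

/-- Membership in `𝓕(X)`: homeomorphisms of `X` changing only finitely many coordinates,
uniformly. -/
def memF {d : ℕ} {A : Type*} [TopologicalSpace A] (X : Set (Config d A))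
    (φ : ↥X ≃ₜ ↥X) : Prop :=
  ∃ n : ℕ, 1 ≤ n ∧ ∀ x : ↥X, ∀ k : Fin d → ℤ, n < normInf k → (φ x).1 k = x.1 k

/-- `𝓕_n(X)`. -/
def Fn {d : ℕ} {A : Type*} [TopologicalSpace A] (X : Set (Config d A)) (n : ℕ) :
    Set (↥X ≃ₜ ↥X) :=
  {φ | (∀ x : ↥X, ∀ k : Fin d → ℤ, n < normInf k → (φ x).1 k = x.1 k) ∧
    ∀ x y : ↥X,
      ((∀ k : Fin d → ℤ, normInf k ≤ n → x.1 k = y.1 k) ↔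
        (∀ k : Fin d → ℤ, normInf k ≤ n → (φ x).1 k = (φ y).1 k))}

/-- The configuration `ω x_{Λ^c}`: equal to `ω` on `Λ` and to `x` off `Λ`. -/
def patch {d : ℕ} {A : Type*} (Λ : Finset (Fin d → ℤ)) (ω : {k // k ∈ Λ} → A)
    (x : Config d A) : Config d A :=
  fun k => if h : k ∈ Λ then ω ⟨k, h⟩ else x k

/-- `f_n = Σ_{i ∈ Λ_n} f ∘ T^i`. -/
noncomputable def fnSum (d : ℕ) {A : Type*} (f : Config d A → ℝ) (n : ℕ)
    (z : Config d A) : ℝ :=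
  ∑ i ∈ boxF d n, f (shift i z)

/-- The σ-algebra `𝓕_Δ` on `X`, generated by the coordinate projections `x ↦ x_i`, `i ∈ Δ`. -/
def cylSigma {d : ℕ} {A : Type*} [MeasurableSpace A] (X : Set (Config d A))
    (Δ : Set (Fin d → ℤ)) : MeasurableSpace ↥X :=
  MeasurableSpace.comap (fun (x : ↥X) (i : ↥Δ) => x.1 i.1) MeasurableSpace.pi

/-- `μ` is a Gibbs measure for `f`: `(φ_f, 𝔗)`-conformal. -/
def IsGibbs (d : ℕ) {A : Type*} [MeasurableSpace A] (X : Set (Config d A))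
    (f : Config d A → ℝ) (μ : Measure ↥X) : Prop :=
  ∀ V W : ↥X → ↥X, Measurable V → Measurable W →
    (∀ x, W (V x) = x) → (∀ x, V (W x) = x) →
    (∀ x : ↥X, ((x.1, (V x).1) ∈ gibbsRel X)) →
    (Measure.map V μ ≪ μ ∧
      ∀ᵐ x ∂μ, (Measure.map V μ).rnDeriv μ x
        = ENNReal.ofReal (Real.exp (phiF f x.1 (W x).1)))

/-- `μ` is a topological Gibbs measure for `f`: `(φ_f|_{𝔗⁰}, 𝔗⁰)`-conformal. -/
def IsTopGibbs (d : ℕ) {A : Type*} [TopologicalSpace A] [MeasurableSpace A]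
    (X : Set (Config d A)) (f : Config d A → ℝ) (μ : Measure ↥X) : Prop :=
  ∀ φ : ↥X ≃ₜ ↥X, memF X φ →
    (Measure.map (⇑φ) μ ≪ μ ∧
      ∀ᵐ x ∂μ, (Measure.map (⇑φ) μ).rnDeriv μ x
        = ENNReal.ofReal (Real.exp (phiF f x.1 (φ.symm x).1)))

/-- Finite-volume Gibbsian ratios defining the kernel `γ_Λ`. -/
noncomputable def gammaFn (d : ℕ) {A : Type*} [Fintype A] (X : Set (Config d A))
    (f : Config d A → ℝ) (Λ : Finset (Fin d → ℤ)) (S : Set ↥X) (x : Config d A)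
    (n : ℕ) : ℝ :=
  (∑ ω : {k // k ∈ Λ} → A,
      (Subtype.val '' S).indicator (fun z => Real.exp (fnSum d f n z)) (patch Λ ω x)) /
  (∑ η : {k // k ∈ Λ} → A,
      X.indicator (fun z => Real.exp (fnSum d f n z)) (patch Λ η x))

/-- The kernel `γ_Λ(S | x)`, defined as the limit of the finite-volume ratios. -/
noncomputable def gamma (d : ℕ) {A : Type*} [Fintype A] (X : Set (Config d A))
    (f : Config d A → ℝ) (Λ : Finset (Fin d → ℤ)) (S : Set ↥X) (x : Config d A) : ℝ :=
  limUnder atTop (gammaFn d X f Λ S x)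

/-- `X` is a subshift of finite type. -/
def IsSFT {d : ℕ} {A : Type*} (X : Set (Config d A)) : Prop :=
  ∃ n : ℕ, 1 ≤ n ∧ ∃ F : Set ({k : Fin d → ℤ // normInf k ≤ n} → A),
    X = {x : Config d A |
      ∀ l : Fin d → ℤ, (fun k : {k : Fin d → ℤ // normInf k ≤ n} => shift l x k.1) ∉ F}

/-- The topological Gibbs relation `𝔗⁰`. -/
def topGibbsRel {d : ℕ} {A : Type*} [TopologicalSpace A] (X : Set (Config d A)) :
    Set (Config d A × Config d A) :=
  {p | ∃ (hx : p.1 ∈ X) (φ : ↥X ≃ₜ ↥X), memF X φ ∧ (φ ⟨p.1, hx⟩).1 = p.2}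

/-- `f` is a local function on `X`. -/
def IsLocal {d : ℕ} {A : Type*} (X : Set (Config d A)) (f : Config d A → ℝ) : Prop :=
  ∃ Λ : Finset (Fin d → ℤ), ∀ x ∈ X, ∀ y ∈ X, (∀ k ∈ Λ, x k = y k) → f x = f y

/-!
By translation invariance, summing the series for `-f = Σ_{Δ ∋ 0} Φ_Δ / |Δ|` over the box gives
`-f_n = Σ_Δ (|Λ_n ∩ Δ| / |Δ|) Φ_Δ`. If `y` and `z` agree off `Λ`, locality of `Φ_Δ` kills every `Δ`
not meeting `Λ`, so `f_n(y) - f_n(z)` is the series of `Φ_Δ(z) - Φ_Δ(y)` over `Δ` meeting `Λ`,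
with weights in `[0, 1]` that are eventually `1`; by dominated convergence it tends to
`H_Λ(z) - H_Λ(y)`. Dividing numerator and denominator of the finite-volume ratio by `e^{f_n(x)}`
therefore turns each term into `e^{H_Λ(x) - H_Λ(ω x_{Λᶜ})}` in the limit.
-/

open Finset

section PowersetSums

variable {ι : Type*} {p : Finset ι → Prop} [DecidablePred p]

theorem summable_ite_of_tendsto_sum_filter_powerset {c : Finset ι → ℝ} {s : ℝ}
    (hc : ∀ Δ, 0 ≤ c Δ)
    (h : Tendsto (fun Δ : Finset ι => ∑ Δ' ∈ Δ.powerset.filter p, c Δ') atTop (𝓝 s)) :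
    Summable fun Δ => if p Δ then c Δ else 0 := by
  classical
  have hnonneg : 0 ≤ fun Δ => if p Δ then c Δ else 0 := fun Δ => ite_nonneg (hc Δ) le_rfl
  have hmono : Monotone fun Δ : Finset ι => ∑ Δ' ∈ Δ.powerset, if p Δ' then c Δ' else 0 :=
    fun _ _ hΔ => sum_le_sum_of_subset_of_nonneg (powerset_mono.2 hΔ) fun _ _ _ => hnonneg _
  simp only [sum_filter] at h
  refine summable_of_sum_le (c := s) hnonneg fun u => ?_
  calc ∑ Δ ∈ u, (if p Δ then c Δ else 0)
      ≤ ∑ Δ ∈ (u.sup id).powerset, if p Δ then c Δ else 0 :=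
        sum_le_sum_of_subset_of_nonneg (fun Δ hΔ => mem_powerset.2 (le_sup (f := id) hΔ))
          fun _ _ _ => hnonneg _
    _ ≤ s := hmono.ge_of_tendsto h _

theorem hasSum_ite_of_tendsto_sum_filter_powerset {g c : Finset ι → ℝ} {s : ℝ}
    (hc : Summable fun Δ => if p Δ then c Δ else 0) (hgc : ∀ Δ, p Δ → |g Δ| ≤ c Δ)
    (h : Tendsto (fun Δ : Finset ι => ∑ Δ' ∈ Δ.powerset.filter p, g Δ') atTop (𝓝 s)) :
    HasSum (fun Δ => if p Δ then g Δ else 0) s := by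
  obtain ⟨t, ht⟩ : Summable fun Δ => if p Δ then g Δ else 0 := by
    refine .of_abs (hc.of_nonneg_of_le (fun _ => abs_nonneg _) fun Δ => ?_)
    split_ifs with hΔ
    exacts [hgc Δ hΔ, abs_zero.le]
  simp only [sum_filter] at h
  rwa [tendsto_nhds_unique (ht.comp tendsto_finset_powerset_atTop_atTop) h] at ht

end PowersetSums

theorem tendsto_of_hasSum_of_abs_le {ι α : Type*} {l : Filter α} {u : ι → ℝ} {a : ℝ}
    {v : α → ι → ℝ} {b : α → ℝ} (hu : HasSum u a) (hv : ∀ n, HasSum (v n) (b n))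
    (hle : ∀ n k, |v n k| ≤ |u k|) (hlim : ∀ k, Tendsto (v · k) l (𝓝 (u k))) :
    Tendsto b l (𝓝 a) := by
  have := tendsto_tsum_of_dominated_convergence hu.summable.abs hlim (.of_forall hle)
  simpa only [(hv _).tsum_eq, hu.tsum_eq] using this

theorem card_inter_div_card_le_one {α : Type*} [DecidableEq α] (s t : Finset α) :
    ((s ∩ t).card / t.card : ℝ) ≤ 1 :=
  div_le_one_of_le₀ (by exact_mod_cast card_le_card inter_subset_right) (Nat.cast_nonneg _)

theorem mem_boxF_iff {d n : ℕ} {k : Fin d → ℤ} : k ∈ boxF d n ↔ normInf k ≤ n := by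
  simp only [boxF, mem_Icc, normInf, Finset.sup_le_iff, mem_univ, true_implies, Pi.le_def,
    ← forall_and, ← abs_le, Int.abs_eq_natAbs, Nat.cast_le]

theorem eventually_card_inter_boxF_div_card_eq_one {d : ℕ} {Λ : Finset (Fin d → ℤ)}
    (hΛ : Λ.Nonempty) : ∀ᶠ n in atTop, ((boxF d n ∩ Λ).card / Λ.card : ℝ) = 1 := by
  filter_upwards [eventually_ge_atTop (Λ.sup normInf)] with n hn
  rw [inter_eq_right.2 fun k hk => mem_boxF_iff.2 ((le_sup hk).trans hn),
    div_self (by exact_mod_cast hΛ.card_pos.ne')]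

theorem apply_eq_of_measurable_cylSigma {d : ℕ} {A β : Type*} [MeasurableSpace A]
    [MeasurableSpace β] [MeasurableSingletonClass β] {X : Set (Config d A)}
    {Δ : Set (Fin d → ℤ)} {g : ↥X → β} (hg : Measurable[cylSigma X Δ] g) {y z : ↥X}
    (hyz : ∀ k ∈ Δ, y.1 k = z.1 k) : g y = g z := by
  obtain ⟨t, -, ht⟩ := hg (measurableSet_singleton (g z))
  have hz : z ∈ g ⁻¹' {g z} := rfl
  have hrestr : (fun i : Δ => y.1 i.1) = fun i => z.1 i.1 := funext fun i => hyz i i.2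
  change y ∈ g ⁻¹' {g z}
  rw [← ht] at hz ⊢
  simpa only [Set.mem_preimage, hrestr] using hz

section Potential

variable {d : ℕ} {A : Type*} {X : Set (Config d A)} {Φ : Finset (Fin d → ℤ) → Config d A → ℝ}

theorem supNormOn_nonneg (X : Set (Config d A)) (g : Config d A → ℝ) : 0 ≤ supNormOn X g :=
  Real.sSup_nonneg <| by rintro _ ⟨_, _, rfl⟩; exact abs_nonneg _

theorem abs_le_supNormOn {g : Config d A → ℝ} (hg : BoundedOn X g) {y : Config d A}
    (hy : y ∈ X) : |g y| ≤ supNormOn X g := by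
  obtain ⟨C, hC⟩ := hg
  exact le_csSup ⟨C, by rintro _ ⟨z, hz, rfl⟩; exact hC z hz⟩ ⟨y, hy, rfl⟩

theorem abs_one_div_natCast_mul_le (n : ℕ) (a : ℝ) : |1 / (n : ℝ) * a| ≤ |a| := by
  rw [abs_mul]
  refine mul_le_of_le_one_left (abs_nonneg _) ?_
  rcases n.eq_zero_or_pos with rfl | hn
  · simp
  · rw [abs_of_pos (by positivity)]
    exact div_le_one_of_le₀ (by exact_mod_cast hn) (Nat.cast_nonneg _)

theorem summable_supNormOn_of_mem {i : Fin d → ℤ}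
    (habs : ∃ s : ℝ, Tendsto (fun Δ : Finset (Fin d → ℤ) =>
        ∑ Λ ∈ Δ.powerset.filter (fun Λ => Λ.Nonempty ∧ i ∈ Λ), supNormOn X (Φ Λ))
      atTop (𝓝 s)) :
    Summable fun Δ => if Δ.Nonempty ∧ i ∈ Δ then supNormOn X (Φ Δ) else 0 :=
  let ⟨_, hs⟩ := habs
  summable_ite_of_tendsto_sum_filter_powerset (fun _ => supNormOn_nonneg _ _) hs

theorem summable_supNormOn_of_inter
    (habs : ∀ i : Fin d → ℤ, ∃ s : ℝ, Tendsto (fun Δ : Finset (Fin d → ℤ) =>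
        ∑ Λ ∈ Δ.powerset.filter (fun Λ => Λ.Nonempty ∧ i ∈ Λ), supNormOn X (Φ Λ))
      atTop (𝓝 s))
    (Λ : Finset (Fin d → ℤ)) :
    Summable fun Δ => if Δ.Nonempty ∧ (Δ ∩ Λ).Nonempty then supNormOn X (Φ Δ) else 0 := by
  refine (summable_sum fun i (_ : i ∈ Λ) => summable_supNormOn_of_mem (habs i)).of_nonneg_of_le
    (fun _ => ite_nonneg (supNormOn_nonneg _ _) le_rfl) fun Δ => ?_
  split_ifs with hΔ
  · obtain ⟨i, hi⟩ := hΔ.2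
    rw [mem_inter] at hi
    calc supNormOn X (Φ Δ) = if Δ.Nonempty ∧ i ∈ Δ then supNormOn X (Φ Δ) else 0 :=
          (if_pos ⟨hΔ.1, hi.1⟩).symm
      _ ≤ _ := single_le_sum (f := fun i => if Δ.Nonempty ∧ i ∈ Δ then supNormOn X (Φ Δ) else 0)
          (fun _ _ => ite_nonneg (supNormOn_nonneg _ _) le_rfl) hi.2
  · exact sum_nonneg fun _ _ => ite_nonneg (supNormOn_nonneg _ _) le_rfl

theorem hasSum_shift_of_hasSum_zero {f : Config d A → ℝ}
    (hinv : ∀ k : Fin d → ℤ, ∀ x ∈ X, shift k x ∈ X)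
    (htrans : ∀ (Λ : Finset (Fin d → ℤ)) (i : Fin d → ℤ), ∀ x ∈ X,
      Φ Λ (shift i x) = Φ (Λ.image (fun k => k + i)) x)
    (h0 : ∀ y ∈ X, HasSum (fun Λ : Finset (Fin d → ℤ) =>
      if Λ.Nonempty ∧ (0 : Fin d → ℤ) ∈ Λ then (1 / (Λ.card : ℝ)) * Φ Λ y else 0) (-f y))
    (i : Fin d → ℤ) {y : Config d A} (hy : y ∈ X) :
    HasSum (fun Λ : Finset (Fin d → ℤ) =>
      if Λ.Nonempty ∧ i ∈ Λ then (1 / (Λ.card : ℝ)) * Φ Λ y else 0) (-f (shift i y)) := by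
  rw [← (Equiv.finsetCongr (Equiv.addRight i)).hasSum_iff]
  convert h0 _ (hinv i y hy) using 2 with Λ
  have hmem : (Equiv.addRight i).symm i ∈ Λ ↔ 0 ∈ Λ := by simp
  simp only [Function.comp_apply, Equiv.finsetCongr_apply, map_nonempty, card_map,
    mem_map_equiv, hmem, htrans Λ i y hy]
  rw [map_eq_image]
  rfl

theorem hasSum_neg_fnSum {f : Config d A → ℝ} {y : Config d A}
    (hshift : ∀ i : Fin d → ℤ, HasSum (fun Λ : Finset (Fin d → ℤ) =>
      if Λ.Nonempty ∧ i ∈ Λ then (1 / (Λ.card : ℝ)) * Φ Λ y else 0) (-f (shift i y)))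
    (n : ℕ) :
    HasSum (fun Λ => ((boxF d n ∩ Λ).card / Λ.card : ℝ) * Φ Λ y) (-fnSum d f n y) := by
  rw [fnSum, ← sum_neg_distrib]
  convert hasSum_sum fun i (_ : i ∈ boxF d n) => hshift i using 2 with Λ
  have hmem (i : Fin d → ℤ) : Λ.Nonempty ∧ i ∈ Λ ↔ i ∈ Λ := and_iff_right_of_imp fun h => ⟨i, h⟩
  simp only [hmem, sum_ite_mem, sum_const, nsmul_eq_mul]
  ring

theorem tendsto_fnSum_sub_fnSum {f H : Config d A → ℝ}
    (hbd : ∀ Λ : Finset (Fin d → ℤ), BoundedOn X (Φ Λ))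
    (habs : ∀ i : Fin d → ℤ, ∃ s : ℝ, Tendsto (fun Δ : Finset (Fin d → ℤ) =>
        ∑ Λ ∈ Δ.powerset.filter (fun Λ => Λ.Nonempty ∧ i ∈ Λ), supNormOn X (Φ Λ))
      atTop (𝓝 s))
    {Λ : Finset (Fin d → ℤ)}
    (hH : ∀ x ∈ X, Tendsto (fun Δ : Finset (Fin d → ℤ) =>
          ∑ Δ' ∈ Δ.powerset.filter (fun Δ' => Δ'.Nonempty ∧ (Δ' ∩ Λ).Nonempty), Φ Δ' x)
        atTop (𝓝 (H x)))
    (hfn : ∀ n : ℕ, ∀ y ∈ X,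
      HasSum (fun Δ => ((boxF d n ∩ Δ).card / Δ.card : ℝ) * Φ Δ y) (-fnSum d f n y))
    (hloc : ∀ Δ : Finset (Fin d → ℤ), ∀ y ∈ X, ∀ z ∈ X, (∀ k ∈ Δ, y k = z k) →
      Φ Δ y = Φ Δ z)
    {y z : Config d A} (hy : y ∈ X) (hz : z ∈ X) (hyz : ∀ k ∉ Λ, y k = z k) :
    Tendsto (fun n => fnSum d f n y - fnSum d f n z) atTop (𝓝 (H z - H y)) := by
  have hoff (Δ : Finset (Fin d → ℤ)) (hΔ : ¬(Δ ∩ Λ).Nonempty) : Φ Δ z = Φ Δ y :=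
    hloc Δ z hz y hy fun k hk =>
      (hyz k fun hkΛ => hΔ ⟨k, mem_inter.2 ⟨hk, hkΛ⟩⟩).symm
  have hham : ∀ w ∈ X, HasSum (fun Δ =>
      if Δ.Nonempty ∧ (Δ ∩ Λ).Nonempty then Φ Δ w else 0) (H w) := fun w hw =>
    hasSum_ite_of_tendsto_sum_filter_powerset (summable_supNormOn_of_inter habs Λ)
      (fun Δ _ => abs_le_supNormOn (hbd Δ) hw) (hH w hw)
  have hdiff : HasSum (fun Δ => Φ Δ z - Φ Δ y) (H z - H y) := by
    refine ((hham z hz).sub (hham y hy)).congr_fun fun Δ => ?_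
    split_ifs with hΔ
    · rfl
    · rw [sub_self, hoff Δ fun h => hΔ ⟨h.mono inter_subset_left, h⟩, sub_self]
  refine tendsto_of_hasSum_of_abs_le hdiff
    (v := fun n Δ => ((boxF d n ∩ Δ).card / Δ.card : ℝ) * (Φ Δ z - Φ Δ y))
    (fun n => ?_) (fun n Δ => ?_) (fun Δ => ?_)
  · have h := ((hfn n z hz).sub (hfn n y hy)).congr_fun
      (g := fun Δ => ((boxF d n ∩ Δ).card / Δ.card : ℝ) * (Φ Δ z - Φ Δ y)) fun Δ => mul_sub _ _ _
    rwa [neg_sub_neg] at h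
  · have hw : (0 : ℝ) ≤ (boxF d n ∩ Δ).card / Δ.card := by positivity
    rw [abs_mul, abs_of_nonneg hw]
    exact mul_le_of_le_one_left (abs_nonneg _) (card_inter_div_card_le_one _ _)
  · rcases Δ.eq_empty_or_nonempty with rfl | hΔ
    · simp [hoff ∅ (by simp)]
    · refine tendsto_const_nhds.congr' ?_
      filter_upwards [eventually_card_inter_boxF_div_card_eq_one hΔ] with n hn
      rw [hn, one_mul]

end Potential

section PartitionSum

variable {d : ℕ} {A : Type*} {Λ : Finset (Fin d → ℤ)} {x : Config d A}

theorem patch_apply_of_notMem {ω : {k // k ∈ Λ} → A} {k : Fin d → ℤ} (hk : k ∉ Λ) :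
    patch Λ ω x k = x k :=
  dif_neg hk

theorem patch_self : patch Λ (fun k => x k) x = x :=
  funext fun k => by by_cases hk : k ∈ Λ <;> simp [patch, hk]

noncomputable def partitionSum [Fintype A] (Λ : Finset (Fin d → ℤ)) (s : Set (Config d A))
    (E : Config d A → ℝ) (x : Config d A) : ℝ :=
  ∑ ω : {k // k ∈ Λ} → A, s.indicator (fun z => Real.exp (E z)) (patch Λ ω x)

variable [Fintype A] {s X : Set (Config d A)}

theorem exp_mul_partitionSum (E : Config d A → ℝ) (c : ℝ) :
    Real.exp c * partitionSum Λ s E x = partitionSum Λ s (fun z => E z + c) x := by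
  simp only [partitionSum, mul_sum]
  refine sum_congr rfl fun ω _ => ?_
  by_cases hω : patch Λ ω x ∈ s
  · rw [Set.indicator_of_mem hω, Set.indicator_of_mem hω, Real.exp_add, mul_comm]
  · rw [Set.indicator_of_notMem hω, Set.indicator_of_notMem hω, mul_zero]

theorem partitionSum_pos (E : Config d A → ℝ) (hx : x ∈ s) : 0 < partitionSum Λ s E x :=
  sum_pos' (fun _ _ => Set.indicator_nonneg (fun _ _ => (Real.exp_pos _).le) _)
    ⟨fun k => x k, mem_univ _, by
      rw [patch_self, Set.indicator_of_mem hx]; exact Real.exp_pos _⟩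

theorem tendsto_partitionSum {α : Type*} {l : Filter α} {E : α → Config d A → ℝ}
    {G : Config d A → ℝ}
    (hE : ∀ z ∈ s, (∀ k ∉ Λ, z k = x k) → Tendsto (E · z) l (𝓝 (G z))) :
    Tendsto (fun n => partitionSum Λ s (E n) x) l (𝓝 (partitionSum Λ s G x)) := by
  refine tendsto_finsetSum _ fun ω _ => ?_
  by_cases hω : patch Λ ω x ∈ s
  · simp only [Set.indicator_of_mem hω]
    exact (hE _ hω fun k hk => patch_apply_of_notMem hk).rexp
  · simp only [Set.indicator_of_notMem hω]
    exact tendsto_const_nhds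

theorem tendsto_partitionSum_div {α : Type*} {l : Filter α} {E : α → Config d A → ℝ}
    {H : Config d A → ℝ} (hx : x ∈ X) (hs : s ⊆ X)
    (hE : ∀ z ∈ X, (∀ k ∉ Λ, z k = x k) → Tendsto (fun n => E n z - E n x) l (𝓝 (H x - H z))) :
    Tendsto (fun n => partitionSum Λ s (E n) x / partitionSum Λ X (E n) x) l
      (𝓝 (partitionSum Λ s (fun z => -H z) x / partitionSum Λ X (fun z => -H z) x)) := by
  have hnormalized (t : Set (Config d A)) (ht : t ⊆ X) :
      Tendsto (fun n => Real.exp (-E n x) * partitionSum Λ t (E n) x) l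
        (𝓝 (Real.exp (H x) * partitionSum Λ t (fun z => -H z) x)) := by
    simp only [exp_mul_partitionSum, ← sub_eq_add_neg, neg_add_eq_sub]
    exact tendsto_partitionSum fun z hz hzx => hE z (ht hz) hzx
  have hpos := mul_pos (Real.exp_pos (H x)) (partitionSum_pos (Λ := Λ) (fun z => -H z) hx)
  have hratio := (hnormalized s hs).div (hnormalized X subset_rfl) hpos.ne'
  rw [mul_div_mul_left _ _ (Real.exp_ne_zero _)] at hratio
  exact hratio.congr fun n => mul_div_mul_left _ _ (Real.exp_ne_zero _)

end PartitionSum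

open Classical in
theorem gamma_eq_boltzmann_of_potential_general {d : ℕ} {A : Type*} [Fintype A] [MeasurableSpace A]
    (X : Set (Config d A))
    (hinv : ∀ k : Fin d → ℤ, ∀ x ∈ X, shift k x ∈ X)
    (Φ : Finset (Fin d → ℤ) → Config d A → ℝ)
    -- each `Φ_Λ` is `𝓕_Λ`-measurable on `X`
    (hmeas : ∀ Λ : Finset (Fin d → ℤ),
      @Measurable ↥X ℝ (cylSigma X (↑Λ : Set (Fin d → ℤ))) _
        (fun y : ↥X => Φ Λ y.1))
    -- the Hamiltonians `H^Φ_Λ(x) = Σ_{Δ' ∈ 𝓢, Δ' ∩ Λ ≠ ∅} Φ_{Δ'}(x)` exist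
    (H : Finset (Fin d → ℤ) → Config d A → ℝ)
    (hH : ∀ Λ : Finset (Fin d → ℤ), ∀ x ∈ X,
      Tendsto (fun Δ : Finset (Fin d → ℤ) =>
          ∑ Δ' ∈ Δ.powerset.filter (fun Δ' => Δ'.Nonempty ∧ (Δ' ∩ Λ).Nonempty), Φ Δ' x)
        atTop (nhds (H Λ x)))
    -- translation invariance: `Φ_Λ ∘ T^i = Φ_{Λ + i}`
    (htrans : ∀ (Λ : Finset (Fin d → ℤ)) (i : Fin d → ℤ), ∀ x ∈ X,
      Φ Λ (shift i x) = Φ (Λ.image (fun k => k + i)) x)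
    -- absolute summability
    (hbd : ∀ Λ : Finset (Fin d → ℤ), ∃ C : ℝ, ∀ x ∈ X, |Φ Λ x| ≤ C)
    (habs : ∀ i : Fin d → ℤ, ∃ s : ℝ, Tendsto (fun Δ : Finset (Fin d → ℤ) =>
        ∑ Λ ∈ Δ.powerset.filter (fun Λ => Λ.Nonempty ∧ i ∈ Λ), supNormOn X (Φ Λ))
      atTop (nhds s))
    -- `f = A_Φ := −Σ_{Λ ∈ 𝓢, 0 ∈ Λ} (1/|Λ|) Φ_Λ`
    (f : Config d A → ℝ)
    (hfA : ∀ x ∈ X, Tendsto (fun Δ : Finset (Fin d → ℤ) =>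
        ∑ Λ ∈ Δ.powerset.filter (fun Λ => Λ.Nonempty ∧ (0 : Fin d → ℤ) ∈ Λ),
          (1 / (Λ.card : ℝ)) * Φ Λ x)
      atTop (nhds (-(f x))))
    (Λ : Finset (Fin d → ℤ)) (S : Set ↥X)
    (x : Config d A) (hx : x ∈ X) :
    gamma d X f Λ S x =
      (∑ ω : {k // k ∈ Λ} → A,
          (Subtype.val '' S).indicator (fun z => Real.exp (-(H Λ z))) (patch Λ ω x)) /
      (∑ η : {k // k ∈ Λ} → A,
          X.indicator (fun z => Real.exp (-(H Λ z))) (patch Λ η x)) := by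
  have hloc : ∀ Δ : Finset (Fin d → ℤ), ∀ y ∈ X, ∀ z ∈ X, (∀ k ∈ Δ, y k = z k) →
      Φ Δ y = Φ Δ z := fun Δ y hy z hz hyz =>
    apply_eq_of_measurable_cylSigma (hmeas Δ) (y := ⟨y, hy⟩) (z := ⟨z, hz⟩) hyz
  have hA : ∀ y ∈ X, HasSum (fun Λ : Finset (Fin d → ℤ) =>
      if Λ.Nonempty ∧ (0 : Fin d → ℤ) ∈ Λ then (1 / (Λ.card : ℝ)) * Φ Λ y else 0) (-f y) :=
    fun y hy => hasSum_ite_of_tendsto_sum_filter_powerset (summable_supNormOn_of_mem (habs 0))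
      (fun Λ _ => (abs_one_div_natCast_mul_le _ _).trans (abs_le_supNormOn (hbd Λ) hy))
      (hfA y hy)
  have hfn (n : ℕ) (y : Config d A) (hy : y ∈ X) :=
    hasSum_neg_fnSum (fun i => hasSum_shift_of_hasSum_zero hinv htrans hA i hy) n
  rw [gamma]
  exact (tendsto_partitionSum_div hx (Subtype.coe_image_subset X S) fun z hz hzx =>
    tendsto_fnSum_sub_fnSum hbd habs (hH Λ) hfn hloc hz hx hzx).limUnder_eq

open Classical in
/-- For a translation-invariant, absolutely summable interaction
potential `Φ` with `f = A_Φ = −Σ_{Λ ∋ 0} (1/|Λ|) Φ_Λ ∈ SV_d(X)`, the kernel `γ_Λ`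
associated to `f` is the Boltzmann–Gibbs kernel of the Hamiltonian
`H^Φ_Λ = Σ_{Δ ∩ Λ ≠ ∅} Φ_Δ`. -/
theorem gamma_eq_boltzmann_of_potential {d : ℕ} (hd : 1 ≤ d) {A : Type*} [Fintype A]
    [Nonempty A] [TopologicalSpace A] [DiscreteTopology A] [MeasurableSpace A]
    [BorelSpace A]
    (X : Set (Config d A)) (hne : X.Nonempty) (hcl : IsClosed X)
    (hinv : ∀ k : Fin d → ℤ, ∀ x ∈ X, shift k x ∈ X)
    (Φ : Finset (Fin d → ℤ) → Config d A → ℝ)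
    -- each `Φ_Λ` is `𝓕_Λ`-measurable on `X`
    (hmeas : ∀ Λ : Finset (Fin d → ℤ),
      @Measurable ↥X ℝ (cylSigma X (↑Λ : Set (Fin d → ℤ))) _
        (fun y : ↥X => Φ Λ y.1))
    -- the Hamiltonians `H^Φ_Λ(x) = Σ_{Δ' ∈ 𝓢, Δ' ∩ Λ ≠ ∅} Φ_{Δ'}(x)` exist
    (H : Finset (Fin d → ℤ) → Config d A → ℝ)
    (hH : ∀ Λ : Finset (Fin d → ℤ), ∀ x ∈ X,
      Tendsto (fun Δ : Finset (Fin d → ℤ) =>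
          ∑ Δ' ∈ Δ.powerset.filter (fun Δ' => Δ'.Nonempty ∧ (Δ' ∩ Λ).Nonempty), Φ Δ' x)
        atTop (nhds (H Λ x)))
    -- translation invariance: `Φ_Λ ∘ T^i = Φ_{Λ + i}`
    (htrans : ∀ (Λ : Finset (Fin d → ℤ)) (i : Fin d → ℤ), ∀ x ∈ X,
      Φ Λ (shift i x) = Φ (Λ.image (fun k => k + i)) x)
    -- absolute summability
    (hbd : ∀ Λ : Finset (Fin d → ℤ), ∃ C : ℝ, ∀ x ∈ X, |Φ Λ x| ≤ C)
    (habs : ∀ i : Fin d → ℤ, ∃ s : ℝ, Tendsto (fun Δ : Finset (Fin d → ℤ) =>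
        ∑ Λ ∈ Δ.powerset.filter (fun Λ => Λ.Nonempty ∧ i ∈ Λ), supNormOn X (Φ Λ))
      atTop (nhds s))
    -- `f = A_Φ := −Σ_{Λ ∈ 𝓢, 0 ∈ Λ} (1/|Λ|) Φ_Λ`
    (f : Config d A → ℝ)
    (hfA : ∀ x ∈ X, Tendsto (fun Δ : Finset (Fin d → ℤ) =>
        ∑ Λ ∈ Δ.powerset.filter (fun Λ => Λ.Nonempty ∧ (0 : Fin d → ℤ) ∈ Λ),
          (1 / (Λ.card : ℝ)) * Φ Λ x)
      atTop (nhds (-(f x))))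
    (hf : MemSV d X f)
    (Λ : Finset (Fin d → ℤ)) (hΛ : Λ.Nonempty) (S : Set ↥X) (hS : MeasurableSet S)
    (x : Config d A) (hx : x ∈ X) :
    gamma d X f Λ S x =
      (∑ ω : {k // k ∈ Λ} → A,
          (Subtype.val '' S).indicator (fun z => Real.exp (-(H Λ z))) (patch Λ ω x)) /
      (∑ η : {k // k ∈ Λ} → A,
          X.indicator (fun z => Real.exp (-(H Λ z))) (patch Λ η x)) :=
  gamma_eq_boltzmann_of_potential_general X hinv Φ hmeas H hH htrans hbd habs f hfA Λ S x hx
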